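/- Let f satisfy Assumption A, let N ∈ ℕ with k = T/N satisfy ν k < 1/4, and let (U^n)_{n=0,…,N} ∈ G²_N be the grid function generated by the randomized backward Euler scheme U^0 = u₀, U^n = U^{n−1} + k f(ξ_n, U^n). Then for every grid function V = (V^n)_{n=0,…,N} ∈ G²_N and every n ∈ {1,…,N}: ‖U^n − V^n‖_{L²(Ω;ℝ^d)} ≤ e^{(2ν+1)t_n} · ( |U^0 − V^0|² + Σ_{j=1}^{n} ( 2 ‖ρ_N^j(V)‖²_{L²(Ω;ℝ^d)} + (2/k) ‖E[ρ_N^j(V) | F_{j−1}]‖²_{L²(Ω;ℝ^d)} ) )^{1/2}. -/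

import Mathlib

open MeasureTheory RealInnerProductSpace

/-- Membership in the class `G²_N` of square-integrable adapted grid functions:
`Z 0` is deterministic and, for `n ∈ {1,…,N}`, both `Z n` and `f(ξ n, Z n)` are
`𝓕 n`-measurable and square-integrable. -/
def InG2 {d : ℕ} {Ω : Type} [MeasurableSpace Ω] (P : Measure Ω)
    (N : ℕ) (𝓕 : ℕ → MeasurableSpace Ω) (ξ : ℕ → Ω → ℝ)
    (f : ℝ → EuclideanSpace ℝ (Fin d) → EuclideanSpace ℝ (Fin d))
    (Z : ℕ → Ω → EuclideanSpace ℝ (Fin d)) : Prop :=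
  (∃ z₀ : EuclideanSpace ℝ (Fin d), ∀ ω, Z 0 ω = z₀) ∧
  ∀ n, 1 ≤ n → n ≤ N →
    Measurable[𝓕 n] (Z n) ∧ MemLp (Z n) 2 P ∧
    Measurable[𝓕 n] (fun ω => f (ξ n ω) (Z n ω)) ∧
    MemLp (fun ω => f (ξ n ω) (Z n ω)) 2 P

/-- The local residual `ρ_N^n(V) = k f(ξ_n, V^n) − V^n + V^{n−1}`. -/
noncomputable def rbeResidual {d : ℕ} {Ω : Type} (k : ℝ) (ξ : ℕ → Ω → ℝ)
    (f : ℝ → EuclideanSpace ℝ (Fin d) → EuclideanSpace ℝ (Fin d))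
    (V : ℕ → Ω → EuclideanSpace ℝ (Fin d)) (n : ℕ) : Ω → EuclideanSpace ℝ (Fin d) :=
  fun ω => k • f (ξ n ω) (V n ω) - V n ω + V (n - 1) ω

/-!
Subtracting `V` from the scheme, the error `eⁿ = Uⁿ − Vⁿ` satisfies
`eⁿ = eⁿ⁻¹ + k (f(ξₙ, Uⁿ) − f(ξₙ, Vⁿ)) + ρⁿ`. The random node `ξₙ` has an absolutely continuous
law, so it avoids the null set `N_f` almost surely and the one-sided Lipschitz condition applies;
testing the error equation with `eⁿ` then gives `|eⁿ|² ≤ |eⁿ⁻¹|² + 2νk|eⁿ|² + 2⟪ρⁿ, eⁿ⁻¹⟫ + |ρⁿ|²`.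
Since `eⁿ⁻¹` is `𝓕ₙ₋₁`-measurable, the expectation of the cross term only sees `E[ρⁿ | 𝓕ₙ₋₁]`,
and Young's inequality bounds it by `‖E[ρⁿ | 𝓕ₙ₋₁]‖² / k + k ‖eⁿ⁻¹‖²`. For `νk < 1/4` one has
`(1 + k) / (1 − 2νk) ≤ e^{(4ν+2)k}` and `1 / (1 − 2νk) ≤ 2`, so
`‖eⁿ‖² ≤ e^{(4ν+2)k} ‖eⁿ⁻¹‖² + 2‖ρⁿ‖² + (2/k)‖E[ρⁿ | 𝓕ₙ₋₁]‖²`, and a discrete Gronwall argument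
concludes.
-/

section InnerProductSpace

variable {E : Type*} [NormedAddCommGroup E] [InnerProductSpace ℝ E]

lemma two_mul_inner_le_div_add_mul {k : ℝ} (hk : 0 < k) (x y : E) :
    2 * ⟪x, y⟫ ≤ ‖x‖ ^ 2 / k + k * ‖y‖ ^ 2 := by
  rw [div_add' _ _ _ hk.ne', le_div_iff₀ hk]
  nlinarith [real_inner_le_norm x y, sq_nonneg (‖x‖ - k * ‖y‖)]

lemma norm_sq_le_of_eq_add_smul_add {e w δ ρ : E} {k ν : ℝ} (hk : 0 ≤ k)
    (he : e = w + k • δ + ρ) (hδ : ⟪δ, e⟫ ≤ ν * ‖e‖ ^ 2) :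
    ‖e‖ ^ 2 ≤ ‖w‖ ^ 2 + 2 * ν * k * ‖e‖ ^ 2 + 2 * ⟪ρ, w⟫ + ‖ρ‖ ^ 2 := by
  have hexpand : ‖e‖ ^ 2 = ⟪w, e⟫ + k * ⟪δ, e⟫ + ⟪ρ, e⟫ := by
    rw [← real_inner_self_eq_norm_sq]
    nth_rewrite 1 [he]
    rw [inner_add_left, inner_add_left, real_inner_smul_left]
  have hwe := norm_sub_sq_real e w
  have hρ : ⟪ρ, e - w⟫ ≤ ‖ρ‖ * ‖e - w‖ := real_inner_le_norm ρ (e - w)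
  rw [inner_sub_right] at hρ
  nlinarith [real_inner_comm w e, mul_le_mul_of_nonneg_left hδ hk,
    sq_nonneg (‖ρ‖ - ‖e - w‖)]

end InnerProductSpace

lemma le_exp_mul_add_of_one_sub_mul_le {a a' r s k ν : ℝ} (hk : 0 < k) (hν : 0 ≤ ν)
    (hνk : ν * k < 1 / 4) (ha' : 0 ≤ a') (hr : 0 ≤ r) (hs : 0 ≤ s)
    (h : (1 - 2 * ν * k) * a ≤ (1 + k) * a' + s / k + r) :
    a ≤ Real.exp ((4 * ν + 2) * k) * a' + (2 * r + 2 / k * s) := by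
  have hpos : 1 / 2 < 1 - 2 * ν * k := by linarith
  have hexp : (4 * ν + 2) * k + 1 ≤ Real.exp ((4 * ν + 2) * k) := Real.add_one_le_exp _
  have hgrowth : 1 + k ≤ (1 - 2 * ν * k) * Real.exp ((4 * ν + 2) * k) := by
    nlinarith [mul_le_mul_of_nonneg_left hexp (by linarith : (0:ℝ) ≤ 1 - 2 * ν * k),
      mul_nonneg hk.le (mul_nonneg (by linarith : (0:ℝ) ≤ 2 * ν + 1)
        (by linarith : (0:ℝ) ≤ 1 - 4 * (ν * k)))]
  have hsk : 0 ≤ s / k := div_nonneg hs hk.le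
  refine le_of_mul_le_mul_left ?_ (by linarith : (0:ℝ) < 1 - 2 * ν * k)
  rw [show 2 / k * s = 2 * (s / k) by ring]
  nlinarith [mul_le_mul_of_nonneg_right hgrowth ha']

lemma le_pow_mul_add_sum_of_le_mul_add {a b : ℕ → ℝ} {c : ℝ} {n : ℕ} (hc : 1 ≤ c)
    (hb : ∀ j, 0 ≤ b j) (h : ∀ m < n, a (m + 1) ≤ c * a m + b (m + 1)) :
    a n ≤ c ^ n * (a 0 + ∑ j ∈ Finset.Icc 1 n, b j) := by
  induction n with
  | zero => simp
  | succ n ih =>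
    have ih := ih fun m hm => h m (Nat.lt_succ_of_lt hm)
    have hcn : 1 ≤ c * c ^ n := by rw [← pow_succ']; exact one_le_pow₀ hc
    rw [Finset.sum_Icc_succ_top (Nat.le_add_left 1 n), pow_succ']
    nlinarith [h n (Nat.lt_succ_self n), mul_le_mul_of_nonneg_left ih (by linarith : 0 ≤ c),
      mul_le_mul_of_nonneg_right hcn (hb (n + 1))]

section ConditionalExpectation

variable {Ω E : Type*} [NormedAddCommGroup E] [InnerProductSpace ℝ E]
  {m m₀ : MeasurableSpace Ω} {μ : Measure Ω}

lemma MeasureTheory.MemLp.integrable_inner {f g : Ω → E} (hf : MemLp f 2 μ) (hg : MemLp g 2 μ) :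
    Integrable (fun ω => ⟪f ω, g ω⟫) μ := by
  refine (L2.integrable_inner (𝕜 := ℝ) (hf.toLp f) (hg.toLp g)).congr ?_
  filter_upwards [hf.coeFn_toLp, hg.coeFn_toLp] with ω hfω hgω
  rw [hfω, hgω]

lemma integral_inner_condExp_left [CompleteSpace E] [IsFiniteMeasure μ] (hm : m ≤ m₀)
    {f g : Ω → E} (hf : MemLp f 2 μ) (hg : MemLp g 2 μ) (hgm : AEStronglyMeasurable[m] g μ) :
    ∫ ω, ⟪(μ[f|m]) ω, g ω⟫ ∂μ = ∫ ω, ⟪f ω, g ω⟫ ∂μ := by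
  have h := inner_condExpL2_eq_inner_fun (𝕜 := ℝ) hm (hf.toLp f) (hg.toLp g)
    (hgm.congr hg.coeFn_toLp.symm)
  rw [L2.inner_def, L2.inner_def] at h
  calc ∫ ω, ⟪(μ[f|m]) ω, g ω⟫ ∂μ = _ := integral_congr_ae ?_
    _ = _ := h
    _ = ∫ ω, ⟪f ω, g ω⟫ ∂μ := integral_congr_ae ?_
  · filter_upwards [hf.condExpL2_ae_eq_condExp (𝕜 := ℝ) hm, hg.coeFn_toLp] with ω hfω hgω
    rw [hfω, hgω]
  · filter_upwards [hf.coeFn_toLp, hg.coeFn_toLp] with ω hfω hgω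
    rw [hfω, hgω]

lemma one_sub_mul_integral_norm_sq_le [CompleteSpace E] [IsFiniteMeasure μ] (hm : m ≤ m₀)
    {e w δ ρ : Ω → E} {k ν : ℝ} (hk : 0 < k) (he : MemLp e 2 μ) (hw : MemLp w 2 μ)
    (hwm : AEStronglyMeasurable[m] w μ) (hρ : MemLp ρ 2 μ)
    (hdecomp : ∀ᵐ ω ∂μ, e ω = w ω + k • δ ω + ρ ω)
    (hδ : ∀ᵐ ω ∂μ, ⟪δ ω, e ω⟫ ≤ ν * ‖e ω‖ ^ 2) :
    (1 - 2 * ν * k) * ∫ ω, ‖e ω‖ ^ 2 ∂μ ≤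
      (1 + k) * ∫ ω, ‖w ω‖ ^ 2 ∂μ + (∫ ω, ‖(μ[ρ|m]) ω‖ ^ 2 ∂μ) / k +
        ∫ ω, ‖ρ ω‖ ^ 2 ∂μ := by
  have hcρ : MemLp (μ[ρ|m]) 2 μ := hρ.condExp one_le_two
  have ie := he.integrable_norm_pow two_ne_zero
  have iw := hw.integrable_norm_pow two_ne_zero
  have iρ := hρ.integrable_norm_pow two_ne_zero
  have icρ := hcρ.integrable_norm_pow two_ne_zero
  have iρw := hρ.integrable_inner hw
  have hpointwise : ∫ ω, ‖e ω‖ ^ 2 ∂μ ≤ ∫ ω, ‖w ω‖ ^ 2 ∂μ +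
      2 * ν * k * ∫ ω, ‖e ω‖ ^ 2 ∂μ + 2 * ∫ ω, ⟪ρ ω, w ω⟫ ∂μ + ∫ ω, ‖ρ ω‖ ^ 2 ∂μ := by
    calc ∫ ω, ‖e ω‖ ^ 2 ∂μ ≤ ∫ ω, (‖w ω‖ ^ 2 + 2 * ν * k * ‖e ω‖ ^ 2 + 2 * ⟪ρ ω, w ω⟫ +
          ‖ρ ω‖ ^ 2) ∂μ := by
          refine integral_mono_ae ie
            (((iw.add (ie.const_mul _)).add (iρw.const_mul _)).add iρ) ?_
          filter_upwards [hdecomp, hδ] with ω hdω hδω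
          exact norm_sq_le_of_eq_add_smul_add hk.le hdω hδω
      _ = _ := by
          rw [integral_add, integral_add, integral_add, integral_const_mul, integral_const_mul]
          all_goals fun_prop
  have hcross : 2 * ∫ ω, ⟪ρ ω, w ω⟫ ∂μ ≤
      (∫ ω, ‖(μ[ρ|m]) ω‖ ^ 2 ∂μ) / k + k * ∫ ω, ‖w ω‖ ^ 2 ∂μ := by
    rw [← integral_inner_condExp_left hm hρ hw hwm, ← integral_const_mul, ← integral_div,
      ← integral_const_mul, ← integral_add (icρ.div_const _) (iw.const_mul _)]
    exact integral_mono ((hcρ.integrable_inner hw).const_mul _)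
      ((icρ.div_const _).add (iw.const_mul _))
      fun ω => two_mul_inner_le_div_add_mul hk _ _
  linarith

lemma integral_norm_sq_sub_le_of_backwardEuler_step [CompleteSpace E] [IsFiniteMeasure μ]
    (hm : m ≤ m₀) {k ν : ℝ} (hk : 0 < k) (hν : 0 ≤ ν) (hνk : ν * k < 1 / 4) {F : Ω → E → E}
    (hF : ∀ᵐ ω ∂μ, ∀ x y, ⟪F ω x - F ω y, x - y⟫ ≤ ν * ‖x - y‖ ^ 2) {u v u' v' : Ω → E}
    (hu : MemLp u 2 μ) (hv : MemLp v 2 μ) (hu' : MemLp u' 2 μ) (hv' : MemLp v' 2 μ)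
    (hFv : MemLp (fun ω => F ω (v ω)) 2 μ)
    (hm' : AEStronglyMeasurable[m] (fun ω => u' ω - v' ω) μ)
    (hu_step : ∀ᵐ ω ∂μ, u ω = u' ω + k • F ω (u ω)) :
    ∫ ω, ‖u ω - v ω‖ ^ 2 ∂μ ≤ Real.exp ((4 * ν + 2) * k) * ∫ ω, ‖u' ω - v' ω‖ ^ 2 ∂μ +
      ((2 * ∫ ω, ‖k • F ω (v ω) - v ω + v' ω‖ ^ 2 ∂μ) +
        (2 / k) * ∫ ω, ‖(μ[fun ω => k • F ω (v ω) - v ω + v' ω|m]) ω‖ ^ 2 ∂μ) := by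
  refine le_exp_mul_add_of_one_sub_mul_le hk hν hνk (integral_nonneg fun _ => by positivity)
    (integral_nonneg fun _ => by positivity) (integral_nonneg fun _ => by positivity) ?_
  refine one_sub_mul_integral_norm_sq_le hm (δ := fun ω => F ω (u ω) - F ω (v ω)) hk
    (hu.sub hv) (hu'.sub hv') hm' (((hFv.const_smul k).sub hv).add hv') ?_ ?_
  · filter_upwards [hu_step] with ω hω
    linear_combination (norm := module) hω
  · filter_upwards [hF] with ω hω using hω _ _

end ConditionalExpectation

lemma ae_add_mul_mem_Icc_diff {Ω : Type*} [MeasurableSpace Ω] {P : Measure Ω} {τ : Ω → ℝ}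
    (hτ : Measurable τ) (hmap : P.map τ = volume.restrict (Set.Icc 0 1))
    {a k T : ℝ} (hk : 0 < k) (ha : 0 ≤ a) (haT : a + k ≤ T)
    {Nf : Set ℝ} (hNf : volume Nf = 0) :
    ∀ᵐ ω ∂P, a + k * τ ω ∈ Set.Icc 0 T \ Nf := by
  refine ae_of_ae_map (p := fun t => a + k * t ∈ Set.Icc 0 T \ Nf) hτ.aemeasurable ?_
  rw [hmap, ae_restrict_iff' measurableSet_Icc]
  have hqmp : Measure.QuasiMeasurePreserving (fun t : ℝ => a + k * t) :=
    (measurePreserving_add_left volume a).quasiMeasurePreserving.comp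
      (Measure.quasiMeasurePreserving_smul volume hk.ne')
  filter_upwards [hqmp.ae (measure_eq_zero_iff_ae_notMem.mp hNf)] with t hNt ht
  exact ⟨⟨by nlinarith [ht.1], by nlinarith [ht.2]⟩, hNt⟩

theorem stmt6_general
    (T : ℝ) (hT : 0 < T) (d : ℕ) (u₀ : EuclideanSpace ℝ (Fin d))
    (f : ℝ → EuclideanSpace ℝ (Fin d) → EuclideanSpace ℝ (Fin d))
    (Nf : Set ℝ) (hNf_null : volume Nf = 0)
    (ν : ℝ) (hν : 0 ≤ ν)
    (hf_onesided : ∀ t ∈ Set.Icc (0:ℝ) T \ Nf, ∀ x y : EuclideanSpace ℝ (Fin d),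
      ⟪f t x - f t y, x - y⟫ ≤ ν * ‖x - y‖ ^ 2)
    -- the randomized temporal setting
    (N : ℕ) (hN : 0 < N) (k : ℝ) (hk : k = T / N) (hkν : ν * k < 1 / 4)
    (Ω : Type) [mΩ : MeasurableSpace Ω] (P : Measure Ω) [IsProbabilityMeasure P]
    (τ : ℕ → Ω → ℝ) (hτ_meas : ∀ n, Measurable (τ n))
    (hτ_unif : ∀ n, 1 ≤ n → n ≤ N →
      Measure.map (τ n) P = volume.restrict (Set.Icc (0:ℝ) 1))
    (ξ : ℕ → Ω → ℝ) (hξ : ∀ n ω, ξ n ω = ((n : ℝ) - 1) * k + k * τ n ω)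
    (𝓕 : ℕ → MeasurableSpace Ω)
    (h𝓕le : ∀ n, 𝓕 n ≤ mΩ)
    -- the numerical solution generated by the randomized backward Euler scheme
    (U : ℕ → Ω → EuclideanSpace ℝ (Fin d))
    (hU0 : ∀ ω, U 0 ω = u₀)
    (hU : ∀ n, 1 ≤ n → n ≤ N →
      Measurable[𝓕 n] (U n) ∧ MemLp (U n) 2 P ∧
      Measurable[𝓕 n] (fun ω => f (ξ n ω) (U n ω)) ∧
      MemLp (fun ω => f (ξ n ω) (U n ω)) 2 P ∧
      (∀ᵐ ω ∂P, U n ω = U (n - 1) ω + k • f (ξ n ω) (U n ω))) :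
    ∀ V : ℕ → Ω → EuclideanSpace ℝ (Fin d), InG2 P N 𝓕 ξ f V →
      ∀ n, 1 ≤ n → n ≤ N →
        Real.sqrt (∫ ω, ‖U n ω - V n ω‖ ^ 2 ∂P) ≤
          Real.exp ((2 * ν + 1) * (n * k)) *
            Real.sqrt ((∫ ω, ‖U 0 ω - V 0 ω‖ ^ 2 ∂P) +
              ∑ j ∈ Finset.Icc 1 n,
                ((2 * ∫ ω, ‖rbeResidual k ξ f V j ω‖ ^ 2 ∂P) +
                  (2 / k) * ∫ ω, ‖(P[rbeResidual k ξ f V j|𝓕 (j - 1)]) ω‖ ^ 2 ∂P)) := by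
  intro V hV n hn1 hnN
  obtain ⟨v₀, hV0⟩ := hV.1
  have hk0 : 0 < k := by rw [hk]; positivity
  have hL2 : ∀ j ≤ N, MemLp (U j) 2 P ∧ MemLp (V j) 2 P ∧
      AEStronglyMeasurable[𝓕 j] (fun ω => U j ω - V j ω) P := by
    rintro (_ | j) hj
    · rw [show U 0 = fun _ => u₀ from funext hU0, show V 0 = fun _ => v₀ from funext hV0]
      exact ⟨memLp_const _, memLp_const _, aestronglyMeasurable_const⟩
    · obtain ⟨hUm, hUp, -⟩ := hU (j + 1) (Nat.succ_pos j) hj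
      obtain ⟨hVm, hVp, -⟩ := hV.2 (j + 1) (Nat.succ_pos j) hj
      exact ⟨hUp, hVp, (hUm.sub hVm).aestronglyMeasurable⟩
  have hgronwall := le_pow_mul_add_sum_of_le_mul_add (c := Real.exp ((4 * ν + 2) * k)) (n := n)
    (a := fun j => ∫ ω, ‖U j ω - V j ω‖ ^ 2 ∂P)
    (b := fun j => (2 * ∫ ω, ‖rbeResidual k ξ f V j ω‖ ^ 2 ∂P) +
      (2 / k) * ∫ ω, ‖(P[rbeResidual k ξ f V j|𝓕 (j - 1)]) ω‖ ^ 2 ∂P)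
    (Real.one_le_exp (by positivity)) (fun j => by positivity) fun m hm => by
      have hmN : m + 1 ≤ N := by omega
      obtain ⟨-, -, -, -, hscheme⟩ := hU (m + 1) (Nat.succ_pos m) hmN
      obtain ⟨-, -, -, hfV⟩ := hV.2 (m + 1) (Nat.succ_pos m) hmN
      have hnode : ∀ᵐ ω ∂P, ξ (m + 1) ω ∈ Set.Icc 0 T \ Nf := by
        have hNk : (N : ℝ) * k = T := by rw [hk]; field_simp
        have hmN' : (m : ℝ) + 1 ≤ N := by exact_mod_cast hmN
        simp only [hξ, Nat.cast_add, Nat.cast_one, add_sub_cancel_right]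
        exact ae_add_mul_mem_Icc_diff (hτ_meas _) (hτ_unif _ (Nat.succ_pos m) hmN) hk0
          (by positivity) (by nlinarith) hNf_null
      exact integral_norm_sq_sub_le_of_backwardEuler_step (h𝓕le m) hk0 hν hkν
        (hnode.mono fun ω hω => hf_onesided _ hω) (hL2 _ hmN).1 (hL2 _ hmN).2.1
        (hL2 m (by omega)).1 (hL2 m (by omega)).2.1 hfV (hL2 m (by omega)).2.2 hscheme
  have hpow : Real.exp ((4 * ν + 2) * k) ^ n = Real.exp ((2 * ν + 1) * (n * k)) ^ 2 := by
    rw [← Real.exp_nat_mul, ← Real.exp_nat_mul]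
    congr 1
    push_cast
    ring
  refine (Real.sqrt_le_sqrt hgronwall).trans_eq ?_
  rw [hpow, Real.sqrt_mul (sq_nonneg _), Real.sqrt_sq (Real.exp_nonneg _)]

/-- Stability of the randomized backward Euler method: if
`νk < 1/4` and `U` is generated by the scheme, then for every `V ∈ G²_N` and
every `n ∈ {1,…,N}`,
`‖Uⁿ−Vⁿ‖_{L²} ≤ e^{(2ν+1)tₙ} (|U⁰−V⁰|² + Σⱼ(2‖ρⱼ‖² + (2/k)‖E[ρⱼ|F_{j−1}]‖²))^{1/2}`. -/
theorem stmt6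
    (T : ℝ) (hT : 0 < T) (d : ℕ) (u₀ : EuclideanSpace ℝ (Fin d))
    (f : ℝ → EuclideanSpace ℝ (Fin d) → EuclideanSpace ℝ (Fin d))
    (hf_meas : Measurable (Function.uncurry f))
    (Nf : Set ℝ) (hNf_null : volume Nf = 0)
    (ν : ℝ) (hν : 0 ≤ ν)
    (hf_onesided : ∀ t ∈ Set.Icc (0:ℝ) T \ Nf, ∀ x y : EuclideanSpace ℝ (Fin d),
      ⟪f t x - f t y, x - y⟫ ≤ ν * ‖x - y‖ ^ 2)
    (g : ℝ → ℝ) (hg_meas : Measurable g) (hg_nonneg : ∀ t, 0 ≤ g t)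
    (hg_L2 : MemLp g 2 (volume.restrict (Set.Icc (0:ℝ) T)))
    (hf_bound : ∀ t ∈ Set.Icc (0:ℝ) T \ Nf, ‖f t 0‖ ≤ g t)
    (hf_lip : ∀ K : Set (EuclideanSpace ℝ (Fin d)), IsCompact K →
      ∃ LK : ℝ → ℝ, Measurable LK ∧ (∀ t, 0 ≤ LK t) ∧
        MemLp LK 2 (volume.restrict (Set.Icc (0:ℝ) T)) ∧
        ∀ t ∈ Set.Icc (0:ℝ) T \ Nf, ∀ x ∈ K, ∀ y ∈ K,
          ‖f t x - f t y‖ ≤ LK t * ‖x - y‖)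
    -- the randomized temporal setting
    (N : ℕ) (hN : 0 < N) (k : ℝ) (hk : k = T / N) (hkν : ν * k < 1 / 4)
    (Ω : Type) [mΩ : MeasurableSpace Ω] (P : Measure Ω) [IsProbabilityMeasure P]
    (hP_complete : ∀ s : Set Ω, P s = 0 → MeasurableSet s)
    (τ : ℕ → Ω → ℝ) (hτ_meas : ∀ n, Measurable (τ n))
    (hτ_indep : ProbabilityTheory.iIndepFun
      (m := fun _ : Fin N => (inferInstance : MeasurableSpace ℝ))
      (fun i : Fin N => τ (i + 1)) P)
    (hτ_unif : ∀ n, 1 ≤ n → n ≤ N →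
      Measure.map (τ n) P = volume.restrict (Set.Icc (0:ℝ) 1))
    (ξ : ℕ → Ω → ℝ) (hξ : ∀ n ω, ξ n ω = ((n : ℝ) - 1) * k + k * τ n ω)
    (𝓕 : ℕ → MeasurableSpace Ω)
    (h𝓕 : ∀ n, 𝓕 n = MeasurableSpace.generateFrom {s : Set Ω | P s = 0} ⊔
      ⨆ j ∈ Finset.Icc 1 n, MeasurableSpace.comap (τ j)
        (inferInstance : MeasurableSpace ℝ))
    (h𝓕le : ∀ n, 𝓕 n ≤ mΩ)
    -- the numerical solution generated by the randomized backward Euler scheme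
    (U : ℕ → Ω → EuclideanSpace ℝ (Fin d))
    (hU0 : ∀ ω, U 0 ω = u₀)
    (hU : ∀ n, 1 ≤ n → n ≤ N →
      Measurable[𝓕 n] (U n) ∧ MemLp (U n) 2 P ∧
      Measurable[𝓕 n] (fun ω => f (ξ n ω) (U n ω)) ∧
      MemLp (fun ω => f (ξ n ω) (U n ω)) 2 P ∧
      (∀ᵐ ω ∂P, U n ω = U (n - 1) ω + k • f (ξ n ω) (U n ω))) :
    ∀ V : ℕ → Ω → EuclideanSpace ℝ (Fin d), InG2 P N 𝓕 ξ f V →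
      ∀ n, 1 ≤ n → n ≤ N →
        Real.sqrt (∫ ω, ‖U n ω - V n ω‖ ^ 2 ∂P) ≤
          Real.exp ((2 * ν + 1) * (n * k)) *
            Real.sqrt ((∫ ω, ‖U 0 ω - V 0 ω‖ ^ 2 ∂P) +
              ∑ j ∈ Finset.Icc 1 n,
                ((2 * ∫ ω, ‖rbeResidual k ξ f V j ω‖ ^ 2 ∂P) +
                  (2 / k) * ∫ ω, ‖(P[rbeResidual k ξ f V j|𝓕 (j - 1)]) ω‖ ^ 2 ∂P)) :=
  stmt6_general T hT d u₀ f Nf hNf_null ν hν hf_onesided N hN k hk hkν Ω (mΩ := mΩ) P τ hτ_meas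
    hτ_unif ξ hξ 𝓕 h𝓕le U hU0 hU
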